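/- arXiv:2506.12926 — 4 statements merged into one kernel-verified Lean document; each statement's English description precedes it below -/
import Mathlib

section
/- Let 0 < α ≤ 1, β > α, and f continuous on [t₀, t₁]. If ∫_{t₀}^{t₁} (t₁−t)^(α−1) [Γ(α)(t₁−t)^(β−α) f(t) − k₀]² dt = 0, where k₀ = (Γ(α+1)/(t₁−t₀)^α) ∫_{t₀}^{t₁} (t₁−t)^(β−1) f(t) dt, then f(t) = 0 for all t ∈ [t₀, t₁). -/
/-!
The integrand is a weight, positive on `(t₀, t₁)`, times the square of the continuous function
`h t = Γ(α) (t₁ - t)^(β - α) f t - k₀`, so `h` vanishes on `[t₀, t₁]`. Since `β > α`, evaluating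
at `t₁` gives `k₀ = -h t₁ = 0`, and then `f t = 0` wherever `(t₁ - t)^(β - α) ≠ 0`.
-/

open MeasureTheory intervalIntegral Set Real

theorem eqOn_zero_of_integral_mul_sq_eq_zero {a b : ℝ} (hab : a < b) {w h : ℝ → ℝ}
    (hw : IntervalIntegrable w volume a b) (hw_pos : ∀ t ∈ Ioo a b, 0 < w t)
    (hh : ContinuousOn h (Icc a b)) (hint : ∫ t in a..b, w t * h t ^ 2 = 0) :
    EqOn h 0 (Icc a b) := by
  have hwh : IntegrableOn (fun t => w t * h t ^ 2) (Ioo a b) :=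
    ((hw.mul_continuousOn (by rw [uIcc_of_le hab.le]; exact hh.pow 2)).def'.mono_set
      (by simpa [uIoc_of_le hab.le] using Ioo_subset_Ioc_self))
  have hnonneg : 0 ≤ᵐ[volume.restrict (Ioo a b)] fun t => w t * h t ^ 2 :=
    ae_restrict_of_forall_mem measurableSet_Ioo fun t ht => by
      have := hw_pos t ht
      positivity
  rw [integral_of_le hab.le, integral_Ioc_eq_integral_Ioo,
    setIntegral_eq_zero_iff_of_nonneg_ae hnonneg hwh] at hint
  refine Measure.eqOn_Icc_of_ae_eq volume hab.ne ?_ hh continuousOn_const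
  rw [Measure.restrict_congr_set Ioo_ae_eq_Icc.symm]
  filter_upwards [hint, ae_restrict_mem measurableSet_Ioo] with t ht hmem
  exact (pow_eq_zero_iff two_ne_zero).mp <| (mul_eq_zero.mp ht).resolve_left (hw_pos t hmem).ne'

theorem intervalIntegrable_sub_rpow {r : ℝ} (hr : -1 < r) (a b c : ℝ) :
    IntervalIntegrable (fun t => (c - t) ^ r) volume a b := by
  simpa using (intervalIntegrable_rpow' hr (a := c - a) (b := c - b)).comp_sub_left c

theorem stmt2_general (t₀ t₁ α β : ℝ) (f : ℝ → ℝ)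
    (ht : t₀ < t₁) (hα0 : 0 < α) (hβ : α < β)
    (hf : ContinuousOn f (Set.Icc t₀ t₁))
    (k₀ : ℝ)
    (hint : (∫ t in t₀..t₁, (t₁ - t) ^ (α - 1) *
      (Real.Gamma α * (t₁ - t) ^ (β - α) * f t - k₀) ^ 2) = 0) :
    ∀ t ∈ Set.Ico t₀ t₁, f t = 0 := by
  set h : ℝ → ℝ := fun t => Gamma α * (t₁ - t) ^ (β - α) * f t - k₀
  have hh : ContinuousOn h (Icc t₀ t₁) :=
    ((continuousOn_const.mul ((continuousOn_const.sub continuousOn_id).rpow_const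
      fun _ _ => Or.inr (sub_pos.2 hβ).le)).mul hf).sub continuousOn_const
  have hzero : EqOn h 0 (Icc t₀ t₁) :=
    eqOn_zero_of_integral_mul_sq_eq_zero ht (intervalIntegrable_sub_rpow (by linarith) _ _ _)
      (fun t ht => rpow_pos_of_pos (sub_pos.2 ht.2) _) hh hint
  have hk : k₀ = 0 := by
    simpa [h, zero_rpow (sub_ne_zero.2 hβ.ne')] using hzero (right_mem_Icc.2 ht.le)
  intro t ht'
  simpa [h, hk, (Gamma_pos_of_pos hα0).ne', (rpow_pos_of_pos (sub_pos.2 ht'.2) _).ne']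
    using hzero (Ico_subset_Icc_self ht')

theorem stmt2 (t₀ t₁ α β : ℝ) (f : ℝ → ℝ)
    (ht : t₀ < t₁) (hα0 : 0 < α) (hα1 : α ≤ 1) (hβ : α < β)
    (hf : ContinuousOn f (Set.Icc t₀ t₁))
    (k₀ : ℝ)
    (hk₀ : k₀ = Real.Gamma (α + 1) / (t₁ - t₀) ^ α *
      ∫ t in t₀..t₁, (t₁ - t) ^ (β - 1) * f t)
    (hint : (∫ t in t₀..t₁, (t₁ - t) ^ (α - 1) *
      (Real.Gamma α * (t₁ - t) ^ (β - α) * f t - k₀) ^ 2) = 0) :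
    ∀ t ∈ Set.Ico t₀ t₁, f t = 0 :=
  stmt2_general t₀ t₁ α β f ht hα0 hβ hf k₀ hint
end

section
/- Let 0 < β ≤ α ≤ 1 and f continuous on [t₀, t₁]. Suppose that for every continuous ψ : [t₀, t₁] → ℝ with ∫_{t₀}^{t₁} (t₁−t)^(α−1) ψ(t) dt = 0 one has ∫_{t₀}^{t₁} (t₁−t)^(β−1) f(t) ψ(t) dt = 0. Then there exists a constant k such that f(t) = (k/Γ(α))·(t₁−t)^(α−β) for all t ∈ [t₀, t₁). -/
/-!
Write `w t = (t₁ - t) ^ (β - 1)` and `p t = (t₁ - t) ^ (α - β)`, so that `w * p = (t₁ - t) ^ (α - 1)`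
on `[t₀, t₁)`. The hypothesis says that `f` is `w`-orthogonal to every continuous `ψ` that is
`w`-orthogonal to `p`. Testing it with the component `g = f - c p` of `f` that is `w`-orthogonal
to `p` gives `∫ w g² = 0`, and since `w > 0` on `[t₀, t₁)` the continuous function `g` vanishes there.
-/

open MeasureTheory intervalIntegral Set

theorem eqOn_zero_of_integral_eq_zero_of_nonneg {a b : ℝ} {F : ℝ → ℝ}
    (hF : ContinuousOn F (Ico a b)) (hF_nonneg : ∀ t ∈ Ico a b, 0 ≤ F t)
    (hFi : IntervalIntegrable F volume a b) (h0 : ∫ t in a..b, F t = 0) :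
    EqOn F 0 (Ico a b) := by
  rcases le_or_gt b a with hba | hab
  · simp [Ico_eq_empty_of_le hba]
  have hrestrict : volume.restrict (Ioc a b) = volume.restrict (Ico a b) :=
    Measure.restrict_congr_set Ico_ae_eq_Ioc.symm
  have hF_ae : F =ᵐ[volume.restrict (Ico a b)] 0 := by
    rw [← hrestrict, ← integral_eq_zero_iff_of_le_of_nonneg_ae hab.le _ hFi]
    · exact h0
    · rw [hrestrict]
      exact ae_restrict_of_forall_mem measurableSet_Ico hF_nonneg
  refine Measure.eqOn_of_ae_eq hF_ae hF continuousOn_const ?_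
  rw [interior_Ico, closure_Ioo hab.ne]
  exact Ico_subset_Icc_self

theorem eqOn_zero_of_integral_mul_sq_eq_zero_s4 {a b : ℝ} {w g : ℝ → ℝ}
    (hw : ContinuousOn w (Ico a b)) (hw_pos : ∀ t ∈ Ico a b, 0 < w t)
    (hg : ContinuousOn g (Ico a b))
    (hi : IntervalIntegrable (fun t => w t * g t ^ 2) volume a b)
    (h0 : ∫ t in a..b, w t * g t ^ 2 = 0) :
    EqOn g 0 (Ico a b) := by
  intro t ht
  have := eqOn_zero_of_integral_eq_zero_of_nonneg (hw.mul (hg.pow 2))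
    (fun s hs => mul_nonneg (hw_pos s hs).le (sq_nonneg _)) hi h0 ht
  simpa [(hw_pos t ht).ne'] using this

theorem exists_eqOn_const_mul_of_forall_integral_mul_eq_zero {a b : ℝ} {w p f : ℝ → ℝ}
    (hw : ContinuousOn w (Ico a b)) (hw_pos : ∀ t ∈ Ico a b, 0 < w t)
    (hwi : IntervalIntegrable w volume a b)
    (hp : ContinuousOn p (Icc a b)) (hp_ne : ∃ t ∈ Ico a b, p t ≠ 0)
    (hf : ContinuousOn f (Icc a b))
    (h : ∀ ψ : ℝ → ℝ, ContinuousOn ψ (Icc a b) →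
      ∫ t in a..b, w t * p t * ψ t = 0 → ∫ t in a..b, w t * f t * ψ t = 0) :
    ∃ c : ℝ, EqOn f (fun t => c * p t) (Ico a b) := by
  obtain ⟨s, hs, hps⟩ := hp_ne
  have huIcc : uIcc a b = Icc a b := uIcc_of_le (hs.1.trans hs.2.le)
  have hint : ∀ u v : ℝ → ℝ, ContinuousOn u (Icc a b) → ContinuousOn v (Icc a b) →
      IntervalIntegrable (fun t => w t * u t * v t) volume a b := fun u v hu hv =>
    (hwi.mul_continuousOn (huIcc ▸ hu)).mul_continuousOn (huIcc ▸ hv)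
  have hsq : ∀ u : ℝ → ℝ, (fun t => w t * u t ^ 2) = fun t => w t * u t * u t := fun u => by
    ext t; ring
  have hpp : ∫ t in a..b, w t * p t * p t ≠ 0 := fun h0 =>
    hps (eqOn_zero_of_integral_mul_sq_eq_zero_s4 hw hw_pos (hp.mono Ico_subset_Icc_self)
      (hsq p ▸ hint p p hp hp) (by rw [hsq p]; exact h0) hs)
  set c := (∫ t in a..b, w t * p t * f t) / ∫ t in a..b, w t * p t * p t
  set g : ℝ → ℝ := fun t => f t - c * p t
  have hg : ContinuousOn g (Icc a b) := hf.sub (continuousOn_const.mul hp)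
  have horth : ∫ t in a..b, w t * p t * g t = 0 := by
    calc ∫ t in a..b, w t * p t * g t
        = ∫ t in a..b, (w t * p t * f t - c * (w t * p t * p t)) := by
          congr 1; ext t; ring
      _ = (∫ t in a..b, w t * p t * f t) - c * ∫ t in a..b, w t * p t * p t := by
          rw [integral_sub (hint p f hp hf) ((hint p p hp hp).const_mul c), intervalIntegral.integral_const_mul]
      _ = 0 := by rw [div_mul_cancel₀ _ hpp, sub_self]
  have hgg : ∫ t in a..b, w t * g t ^ 2 = 0 := by
    calc ∫ t in a..b, w t * g t ^ 2
        = ∫ t in a..b, (w t * f t * g t - c * (w t * p t * g t)) := by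
          congr 1; ext t; ring
      _ = (∫ t in a..b, w t * f t * g t) - c * ∫ t in a..b, w t * p t * g t := by
          rw [integral_sub (hint f g hf hg) ((hint p g hp hg).const_mul c), intervalIntegral.integral_const_mul]
      _ = 0 := by rw [h g hg horth, horth, mul_zero, sub_zero]
  refine ⟨c, fun t ht => sub_eq_zero.1 ?_⟩
  exact eqOn_zero_of_integral_mul_sq_eq_zero_s4 hw hw_pos (hg.mono Ico_subset_Icc_self)
    (hsq g ▸ hint g g hg hg) hgg ht

theorem stmt4_general (t₀ t₁ α β : ℝ) (f : ℝ → ℝ)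
    (ht : t₀ < t₁) (hβ0 : 0 < β) (hβα : β ≤ α)
    (hf : ContinuousOn f (Set.Icc t₀ t₁))
    (h : ∀ ψ : ℝ → ℝ, ContinuousOn ψ (Set.Icc t₀ t₁) →
      (∫ t in t₀..t₁, (t₁ - t) ^ (α - 1) * ψ t) = 0 →
      (∫ t in t₀..t₁, (t₁ - t) ^ (β - 1) * f t * ψ t) = 0) :
    ∃ k : ℝ, ∀ t ∈ Set.Ico t₀ t₁,
      f t = k / Real.Gamma α * (t₁ - t) ^ (α - β) := by
  have hw : ContinuousOn (fun t => (t₁ - t) ^ (β - 1)) (Ico t₀ t₁) :=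
    (continuousOn_const.sub continuousOn_id).rpow_const fun t ht => Or.inl (sub_pos.2 ht.2).ne'
  have hwi : IntervalIntegrable (fun t => (t₁ - t) ^ (β - 1)) volume t₀ t₁ := by
    simpa using (intervalIntegrable_rpow' (a := t₁ - t₀) (b := 0) (by linarith)).comp_sub_left t₁
  have hp : ContinuousOn (fun t => (t₁ - t) ^ (α - β)) (Icc t₀ t₁) :=
    (continuousOn_const.sub continuousOn_id).rpow_const fun _ _ => Or.inr (sub_nonneg.2 hβα)
  have hwp : ∀ ψ : ℝ → ℝ, ∫ t in t₀..t₁, (t₁ - t) ^ (β - 1) * (t₁ - t) ^ (α - β) * ψ t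
      = ∫ t in t₀..t₁, (t₁ - t) ^ (α - 1) * ψ t := fun ψ =>
    integral_congr_Ioo_of_le ht.le fun t ht => by
      rw [← Real.rpow_add (sub_pos.2 ht.2)]; congr 2; ring
  obtain ⟨c, hc⟩ := exists_eqOn_const_mul_of_forall_integral_mul_eq_zero hw
    (fun t ht => Real.rpow_pos_of_pos (sub_pos.2 ht.2) _) hwi hp
    ⟨t₀, left_mem_Ico.2 ht, (Real.rpow_pos_of_pos (sub_pos.2 ht) _).ne'⟩ hf
    fun ψ hψ h0 => h ψ hψ (hwp ψ ▸ h0)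
  refine ⟨c * Real.Gamma α, fun t ht => ?_⟩
  rw [hc ht, mul_div_cancel_right₀ _ (Real.Gamma_pos_of_pos (hβ0.trans_le hβα)).ne']

/-- Fractional Du Bois-Reymond lemma, case 0 < β ≤ α ≤ 1. -/
theorem stmt4 (t₀ t₁ α β : ℝ) (f : ℝ → ℝ)
    (ht : t₀ < t₁) (hβ0 : 0 < β) (hβα : β ≤ α) (hα1 : α ≤ 1)
    (hf : ContinuousOn f (Set.Icc t₀ t₁))
    (h : ∀ ψ : ℝ → ℝ, ContinuousOn ψ (Set.Icc t₀ t₁) →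
      (∫ t in t₀..t₁, (t₁ - t) ^ (α - 1) * ψ t) = 0 →
      (∫ t in t₀..t₁, (t₁ - t) ^ (β - 1) * f t * ψ t) = 0) :
    ∃ k : ℝ, ∀ t ∈ Set.Ico t₀ t₁,
      f t = k / Real.Gamma α * (t₁ - t) ^ (α - β) :=
  stmt4_general t₀ t₁ α β f ht hβ0 hβα hf h
end

section
/- With ψ[l₁, l₂](t, ε) = (t − (τ + l₁ε))^α − (t − (τ + l₂ε))^α for l₂ > l₁ and φ(t, ε) = ψ[0, a](t, ε) − (a/b)·ψ[a, a+b](t, ε), the ratio k(ε) = φ(t₁, ε)/ψ[0, a+b](t₁, ε) tends to 0 as ε → 0⁺. -/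
/-! Both `φ(t₁, ·)` and `ψ[0, a+b](t₁, ·)` vanish at `ε = 0`, so near `0` their ratio is the
ratio of their difference quotients at `0`, which tends to the ratio of their derivatives.
With `d = α (t₁ - τ)^(α-1) > 0` these are `φ'(0) = a d - (a/b) b d = 0` and
`ψ[0, a+b]'(0) = (a+b) d ≠ 0`. -/

open Filter Topology

theorem tendsto_div_nhdsNE_of_hasDerivAt {𝕜 : Type*} [NontriviallyNormedField 𝕜]
    {f g : 𝕜 → 𝕜} {f' g' x : 𝕜} (hf : HasDerivAt f f' x) (hg : HasDerivAt g g' x)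
    (hfx : f x = 0) (hgx : g x = 0) (hg' : g' ≠ 0) :
    Tendsto (fun y => f y / g y) (𝓝[≠] x) (𝓝 (f' / g')) := by
  refine (hf.tendsto_slope.div hg.tendsto_slope hg').congr' ?_
  filter_upwards [self_mem_nhdsWithin] with y hy
  rw [Pi.div_apply, slope_def_field, slope_def_field, hfx, hgx, sub_zero, sub_zero]
  exact div_div_div_cancel_right₀ (sub_ne_zero.2 hy) _ _

theorem hasDerivAt_rpow_sub_add_mul {α τ t₁ : ℝ} (hτ : τ < t₁) (l : ℝ) :
    HasDerivAt (fun ε : ℝ => (t₁ - (τ + l * ε)) ^ α) (-(l * (α * (t₁ - τ) ^ (α - 1)))) 0 := by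
  have hlin : HasDerivAt (fun ε : ℝ => t₁ - (τ + l * ε)) (-l) 0 := by
    simpa using (((hasDerivAt_id (0 : ℝ)).const_mul l).const_add τ).const_sub t₁
  convert hlin.rpow_const (p := α) (Or.inl (by simpa using (sub_pos.2 hτ).ne')) using 1
  simp only [mul_zero, add_zero]
  ring

theorem stmt9_general (α a b τ t₁ : ℝ) (hα0 : 0 < α)
    (ha : 0 < a) (hb : 0 < b) (hτ : τ < t₁) :
    Filter.Tendsto (fun ε : ℝ =>
      ((((t₁ - τ) ^ α - (t₁ - (τ + a * ε)) ^ α)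
        - a / b * ((t₁ - (τ + a * ε)) ^ α - (t₁ - (τ + (a + b) * ε)) ^ α))
      / ((t₁ - τ) ^ α - (t₁ - (τ + (a + b) * ε)) ^ α)))
      (nhdsWithin 0 (Set.Ioi 0)) (nhds 0) := by
  have hψa := hasDerivAt_rpow_sub_add_mul (α := α) hτ a
  have hψab := hasDerivAt_rpow_sub_add_mul (α := α) hτ (a + b)
  have hφ : HasDerivAt (fun ε : ℝ => ((t₁ - τ) ^ α - (t₁ - (τ + a * ε)) ^ α)
      - a / b * ((t₁ - (τ + a * ε)) ^ α - (t₁ - (τ + (a + b) * ε)) ^ α)) 0 0 := by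
    refine (((hasDerivAt_const _ _).sub hψa).sub ((hψa.sub hψab).const_mul (a / b))).congr_deriv ?_
    linear_combination (-(α * (t₁ - τ) ^ (α - 1))) * div_mul_cancel₀ a hb.ne'
  have hψ : HasDerivAt (fun ε : ℝ => (t₁ - τ) ^ α - (t₁ - (τ + (a + b) * ε)) ^ α)
      ((a + b) * (α * (t₁ - τ) ^ (α - 1))) 0 :=
    ((hasDerivAt_const _ _).sub hψab).congr_deriv (by ring)
  have hlim := tendsto_div_nhdsNE_of_hasDerivAt hφ hψ (by simp) (by simp) (by positivity)
  simpa using hlim.mono_left (nhdsGT_le_nhdsNE 0)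

theorem stmt9 (α a b τ t₁ : ℝ) (hα0 : 0 < α) (hα1 : α ≤ 1)
    (ha : 0 < a) (hb : 0 < b) (hτ : τ < t₁) :
    Filter.Tendsto (fun ε : ℝ =>
      ((((t₁ - τ) ^ α - (t₁ - (τ + a * ε)) ^ α)
        - a / b * ((t₁ - (τ + a * ε)) ^ α - (t₁ - (τ + (a + b) * ε)) ^ α))
      / ((t₁ - τ) ^ α - (t₁ - (τ + (a + b) * ε)) ^ α)))
      (nhdsWithin 0 (Set.Ioi 0)) (nhds 0) :=
  stmt9_general α a b τ t₁ hα0 ha hb hτ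
end

section
/- Let L : ℝⁿ → ℝ be differentiable at y ∈ ℝⁿ. Suppose that for all a, b > 0 and all ξ ∈ ℝⁿ one has a·L(y + ξ) + b·L(y − (a/b)·ξ) − (a+b)·L(y) ≥ 0. Then for every ξ ∈ ℝⁿ, L(y + ξ) − L(y) − ⟨∇L(y), ξ⟩ ≥ 0. -/
open RealInnerProductSpace

theorem HasLineDerivAt.le_of_forall_pos_mul_le_sub {E : Type*} [AddCommGroup E] [Module ℝ E]
    {f : E → ℝ} {f' c : ℝ} {x v : E} (hf : HasLineDerivAt ℝ f f' x v)
    (hle : ∀ t : ℝ, 0 < t → c * t ≤ f (x + t • v) - f x) : c ≤ f' := by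
  refine ge_of_tendsto hf.tendsto_slope_zero_right ?_
  filter_upwards [self_mem_nhdsWithin] with t (ht : 0 < t)
  rw [smul_eq_mul, ← div_eq_inv_mul, le_div_iff₀ ht]
  exact hle t ht

/-- Weierstrass condition from the first-order necessary condition. -/
theorem stmt11 (n : ℕ) (L : EuclideanSpace ℝ (Fin n) → ℝ)
    (y : EuclideanSpace ℝ (Fin n)) (hd : DifferentiableAt ℝ L y)
    (h : ∀ a b : ℝ, 0 < a → 0 < b → ∀ ξ : EuclideanSpace ℝ (Fin n),
      a * L (y + ξ) + b * L (y - (a / b) • ξ) - (a + b) * L y ≥ 0) :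
    ∀ ξ : EuclideanSpace ℝ (Fin n),
      L (y + ξ) - L y - (inner ℝ (gradient L y) (ξ) : ℝ) ≥ 0 := by
  intro ξ
  have hline : HasLineDerivAt ℝ L (-⟪gradient L y, ξ⟫) y (-ξ) := by
    simpa [InnerProductSpace.toDual_apply_apply, inner_neg_right] using
      hd.hasGradientAt.hasFDerivAt.hasLineDerivAt (-ξ)
  -- With `a = t`, `b = 1` the hypothesis bounds the difference quotients of `L` along `-ξ`.
  have hslope : L y - L (y + ξ) ≤ -⟪gradient L y, ξ⟫ := by
    refine hline.le_of_forall_pos_mul_le_sub fun t ht => ?_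
    have := h t 1 ht one_pos ξ
    rw [div_one] at this
    rw [smul_neg, ← sub_eq_add_neg]
    linarith
  linarith
end
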